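/- Let p ≥ 5 be prime with Legendre symbol (−α/p) = −1 for a positive integer α, and let 1 ≤ j ≤ p−1. Then for all nonnegative integers β and n, Q_{4α}^α(p^{2β+1}(pn+j) + (α+1)(p^{2β+2}−1)/24) ≡ 0 (mod 2). -/

import Mathlib

/-
Over `𝔽₂` the generating function `∏_{n ≢ ±α (mod 4α)} (1 + qⁿ)` of `Q_{4α}^α` equals
`E(q) E(q^α)`, where `E(q) = ∏ (1 + qⁿ)`: the omitted factors `B = ∏_{m odd} (1 + q^{αm})` satisfy
`E(q^α) = B · E(q^{2α}) = B · E(q^α)²`, so `B` is the inverse of `E(q^α)`. Since `1 + qⁿ = 1 - qⁿ`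
in characteristic 2, Euler's pentagonal number theorem shows that the coefficient of `qᵏ` in `E` is
odd only if `24k + 1 = (6m - 1)²`. Hence if `Q_{4α}^α(N)` is odd, then `24N + α + 1 = x² + αy²`.
For the `N` of the theorem, `24N + α + 1 = p^{2β+1} u` with `p ∤ u`. As `-α` is a non-residue
mod `p`, `p ∣ x² + αy²` forces `p ∣ x` and `p ∣ y`, and descending on the odd exponent of `p`
yields a contradiction.
-/

/-- `Q t s n` is the number of partitions of `n` into distinct parts such that
no part is congruent to `s` or `t - s` modulo `t`. -/
noncomputable def Q (t s n : ℕ) : ℕ :=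
  Nat.card {p : n.Partition // p.parts.Nodup ∧
    ∀ x ∈ p.parts, x % t ≠ s % t ∧ x % t ≠ (t - s) % t}

open Finset PowerSeries
open scoped PowerSeries.WithPiTopology

theorem HasProd.expand {R ι : Type*} [CommRing R] [TopologicalSpace R] {f : ι → R⟦X⟧}
    {a : R⟦X⟧} (h : HasProd f a) (c : ℕ) (hc : c ≠ 0) :
    HasProd (fun i ↦ expand c hc (f i)) (expand c hc a) := by
  rw [HasProd, WithPiTopology.tendsto_iff_coeff_tendsto] at h ⊢
  intro d
  simp_rw [← map_prod, coeff_expand]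
  split_ifs
  · exact h _
  · exact tendsto_const_nhds

instance PowerSeries.instCharP {R : Type*} [Semiring R] (p : ℕ) [CharP R p] : CharP R⟦X⟧ p :=
  charP_of_injective_ringHom C_injective p

namespace Nat.Partition

noncomputable def distinctsGenFun (R : Type*) [CommSemiring R] (s : ℕ → Prop) [DecidablePred s] :
    R⟦X⟧ :=
  PowerSeries.mk fun n ↦ (#(restricted n s ∩ distincts n) : R)

variable {R : Type*}

@[simp]
theorem coeff_distinctsGenFun [CommSemiring R] (s : ℕ → Prop) [DecidablePred s] (n : ℕ) :
    coeff n (distinctsGenFun R s) = #(restricted n s ∩ distincts n) :=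
  coeff_mk _ _

theorem constantCoeff_distinctsGenFun [CommSemiring R] (s : ℕ → Prop) [DecidablePred s] :
    constantCoeff (distinctsGenFun R s) = 1 := by
  rw [← coeff_zero_eq_constantCoeff_apply, coeff_distinctsGenFun]
  simp [restricted, distincts]

theorem distinctsGenFun_congr [CommSemiring R] {s t : ℕ → Prop} [DecidablePred s]
    [DecidablePred t] (h : ∀ n, s n ↔ t n) : distinctsGenFun R s = distinctsGenFun R t := by
  obtain rfl : s = t := funext fun n ↦ propext (h n)
  congr!

theorem hasProd_distinctsGenFun [CommSemiring R] [TopologicalSpace R] [T2Space R]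
    (s : ℕ → Prop) [DecidablePred s] :
    HasProd (fun i ↦ if s (i + 1) then 1 + X ^ (i + 1) else 1) (distinctsGenFun R s) := by
  convert hasProd_genFun (fun i c ↦ if s i ∧ c = 1 then (1 : R) else 0) using 1
  · ext1 i
    rw [tsum_eq_single 0 (fun j hj ↦ by simp [hj])]
    by_cases h : s (i + 1) <;> simp [h]
  · ext n
    simp_rw [coeff_distinctsGenFun, coeff_genFun, Finsupp.prod, prod_boole, sum_boole]
    congr 2
    ext p
    simp only [restricted, distincts, mem_inter, mem_filter, mem_univ, true_and,
      Multiset.nodup_iff_count_eq_one, Multiset.toFinsupp_support, Multiset.toFinsupp_apply,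
      Multiset.mem_toFinset]
    exact forall₂_and.symm

theorem hasProd_distinctsGenFun_true [CommSemiring R] [TopologicalSpace R] [T2Space R] :
    HasProd (fun i ↦ 1 + X ^ (i + 1)) (distinctsGenFun R fun _ ↦ True) := by
  simpa using hasProd_distinctsGenFun (R := R) fun _ ↦ True

theorem distinctsGenFun_and_mul_and_not [CommSemiring R] (s t : ℕ → Prop) [DecidablePred s]
    [DecidablePred t] :
    distinctsGenFun R (fun n ↦ s n ∧ t n) * distinctsGenFun R (fun n ↦ s n ∧ ¬t n) =
      distinctsGenFun R s := by
  let : TopologicalSpace R := ⊥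
  have : DiscreteTopology R := ⟨rfl⟩
  refine ((hasProd_distinctsGenFun _).mul (hasProd_distinctsGenFun _)).unique ?_
  convert hasProd_distinctsGenFun (R := R) s using 2 with i
  by_cases hs : s (i + 1) <;> by_cases ht : t (i + 1) <;> simp [hs, ht]

theorem distinctsGenFun_dvd [CommRing R] {c : ℕ} (hc : c ≠ 0) :
    distinctsGenFun R (c ∣ ·) = expand c hc (distinctsGenFun R fun _ ↦ True) := by
  let : TopologicalSpace R := ⊥
  have : DiscreteTopology R := ⟨rfl⟩
  have hsucc (i : ℕ) : c * i + (c - 1) + 1 = c * (i + 1) := by rw [Nat.mul_succ]; omega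
  have hinj : Function.Injective fun i ↦ c * i + (c - 1) := fun i j h ↦ by simpa [hc] using h
  have hone : ∀ n ∉ Set.range fun i ↦ c * i + (c - 1),
      (if c ∣ n + 1 then 1 + X ^ (n + 1) else 1 : R⟦X⟧) = 1 := by
    rintro n hn
    rw [if_neg]
    rintro ⟨m, hm⟩
    obtain ⟨k, rfl⟩ : ∃ k, m = k + 1 := Nat.exists_eq_succ_of_ne_zero (by rintro rfl; simp at hm)
    exact hn ⟨k, by have := hsucc k; dsimp only; omega⟩
  have hcomp := (hinj.hasProd_iff hone).mpr (hasProd_distinctsGenFun (R := R) (c ∣ ·))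
  have hexp := (hasProd_distinctsGenFun_true (R := R)).expand c hc
  refine hcomp.unique (hexp.congr_fun fun i ↦ ?_)
  simp only [Function.comp_apply, hsucc, dvd_mul_right, if_true, map_add, map_one, map_pow,
    expand_X, pow_mul]

section CharTwo

variable [CommRing R] [CharP R 2]

theorem distinctsGenFun_true_eq_pentagonalSeries :
    distinctsGenFun R (fun _ ↦ True) = pentagonalSeries R := by
  let : TopologicalSpace R := ⊥
  have : DiscreteTopology R := ⟨rfl⟩
  refine hasProd_distinctsGenFun_true.unique
    ((WithPiTopology.hasProd_one_sub_X_pow R).congr_fun fun i ↦ ?_)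
  rw [sub_eq_add_neg, CharTwo.neg_eq]

theorem expand_two_distinctsGenFun_true :
    expand 2 two_ne_zero (distinctsGenFun R fun _ ↦ True) =
      (distinctsGenFun R fun _ ↦ True) ^ 2 := by
  let : TopologicalSpace R := ⊥
  have : DiscreteTopology R := ⟨rfl⟩
  have hE : HasProd (fun i ↦ 1 + X ^ (i + 1)) (distinctsGenFun R fun _ ↦ True) :=
    hasProd_distinctsGenFun_true
  rw [sq]
  refine (hE.expand 2 two_ne_zero).unique ((hE.mul hE).congr_fun fun i ↦ ?_)
  simp [← sq, CharTwo.add_sq, ← pow_mul, mul_comm]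

theorem distinctsGenFun_not_oddMul_eq_mul_expand {c : ℕ} (hc : c ≠ 0) :
    distinctsGenFun R (fun n ↦ ¬(c ∣ n ∧ ¬2 * c ∣ n)) =
      distinctsGenFun R (fun _ ↦ True) * expand c hc (distinctsGenFun R fun _ ↦ True) := by
  set E := distinctsGenFun R fun _ ↦ True
  set F := expand c hc E
  set B := distinctsGenFun R fun n ↦ c ∣ n ∧ ¬2 * c ∣ n
  have hF : F = F * (F * B) := by
    have h2c : distinctsGenFun R (fun n ↦ c ∣ n ∧ 2 * c ∣ n) = F ^ 2 := by
      rw [distinctsGenFun_congr fun n ↦ and_iff_right_of_imp (dvd_trans (dvd_mul_left c 2)),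
        mul_comm, distinctsGenFun_dvd (mul_ne_zero hc two_ne_zero), expand_mul _ _ _ two_ne_zero,
        expand_two_distinctsGenFun_true, map_pow]
    rw [← mul_assoc, ← sq, ← h2c, distinctsGenFun_and_mul_and_not, distinctsGenFun_dvd hc]
  have hunit : IsUnit F := by
    rw [isUnit_iff_constantCoeff, constantCoeff_expand, constantCoeff_distinctsGenFun]
    exact isUnit_one
  have hBF : B * F = 1 := by
    rw [mul_comm]
    exact hunit.mul_left_cancel (hF.symm.trans (mul_one F).symm)
  have hAB : distinctsGenFun R (fun n ↦ ¬(c ∣ n ∧ ¬2 * c ∣ n)) * B = E := by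
    refine Eq.trans ?_
      (distinctsGenFun_and_mul_and_not (fun _ ↦ True) fun n ↦ ¬(c ∣ n ∧ ¬2 * c ∣ n))
    congr 1 <;> exact distinctsGenFun_congr fun n ↦ by simp only [true_and, not_not]
  rw [← mul_one (distinctsGenFun R _), ← hBF, ← mul_assoc, hAB]

end CharTwo

end Nat.Partition

theorem six_mul_sub_one_sq (k : ℤ) : (6 * k - 1) ^ 2 = 24 * (pentagonal k : ℤ) + 1 := by
  linear_combination (-12 : ℤ) * two_mul_natCast_pentagonal k

namespace Int

variable {p : ℕ} [Fact p.Prime] {a : ℤ}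

theorem prime_dvd_of_dvd_sq_add_mul_sq (ha : ¬IsSquare ((-a : ℤ) : ZMod p)) {x y : ℤ}
    (h : (p : ℤ) ∣ x ^ 2 + a * y ^ 2) : (p : ℤ) ∣ x ∧ (p : ℤ) ∣ y := by
  simp only [← ZMod.intCast_zmod_eq_zero_iff_dvd] at h ⊢
  push_cast at h ⊢
  have hy : (y : ZMod p) = 0 := by
    by_contra hy
    refine ha ⟨x / y, ?_⟩
    push_cast
    field_simp
    linear_combination -h
  rw [hy] at h
  exact ⟨pow_eq_zero_iff two_ne_zero |>.mp (by simpa using h), hy⟩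

theorem exists_mul_sq_add_mul_sq_eq (ha : ¬IsSquare ((-a : ℤ) : ZMod p)) {x y n : ℤ}
    (h : x ^ 2 + a * y ^ 2 = p * n) : ∃ x' y', p * (x' ^ 2 + a * y' ^ 2) = n := by
  obtain ⟨⟨x', rfl⟩, ⟨y', rfl⟩⟩ := prime_dvd_of_dvd_sq_add_mul_sq ha (h ▸ dvd_mul_right _ _)
  have hp : (p : ℤ) ≠ 0 := by exact_mod_cast (Fact.out : p.Prime).ne_zero
  exact ⟨x', y', mul_left_cancel₀ hp (by linear_combination h)⟩

theorem sq_add_mul_sq_ne_prime_pow_odd_mul (ha : ¬IsSquare ((-a : ℤ) : ZMod p)) {u : ℤ}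
    (hu : ¬(p : ℤ) ∣ u) (γ : ℕ) (x y : ℤ) : x ^ 2 + a * y ^ 2 ≠ p ^ (2 * γ + 1) * u := by
  have hp : (p : ℤ) ≠ 0 := by exact_mod_cast (Fact.out : p.Prime).ne_zero
  induction γ generalizing x y with
  | zero =>
    intro h
    obtain ⟨x', y', h'⟩ := exists_mul_sq_add_mul_sq_eq ha (n := u) (by simpa using h)
    exact hu ⟨_, h'.symm⟩
  | succ γ ih =>
    intro h
    obtain ⟨x', y', h'⟩ := exists_mul_sq_add_mul_sq_eq ha (n := p ^ (2 * γ + 2) * u)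
      (by rw [h]; ring)
    exact ih x' y' (mul_left_cancel₀ hp (h'.trans (by ring)))

end Int

theorem mod_four_mul_ne_iff {a : ℕ} (ha : 0 < a) (x : ℕ) :
    (x % (4 * a) ≠ a % (4 * a) ∧ x % (4 * a) ≠ (4 * a - a) % (4 * a)) ↔
      ¬(a ∣ x ∧ ¬2 * a ∣ x) := by
  rw [Nat.mod_eq_of_lt (by omega : a < 4 * a), Nat.mod_eq_of_lt (by omega : 4 * a - a < 4 * a),
    show 4 * a - a = a * 3 by omega]
  by_cases hx : a ∣ x
  · obtain ⟨y, rfl⟩ := hx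
    rw [mul_comm 4 a, Nat.mul_mod_mul_left, mul_comm 2 a, Nat.mul_dvd_mul_iff_left ha]
    simp only [ne_eq, mul_eq_left₀ ha.ne', Nat.mul_left_cancel_iff ha, dvd_mul_right, true_and]
    omega
  · have hmod : x % (4 * a) % a = x % a := Nat.mod_mod_of_dvd x (dvd_mul_left a 4)
    have hxa : x % a ≠ 0 := fun h ↦ hx (Nat.dvd_of_mod_eq_zero h)
    refine iff_of_true ⟨fun h ↦ ?_, fun h ↦ ?_⟩ (fun h ↦ hx h.1) <;> simp_all

open Nat.Partition in
theorem Q_four_mul_eq_card {a : ℕ} (ha : 0 < a) (N : ℕ) :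
    Q (4 * a) a N = #(restricted N (fun n ↦ ¬(a ∣ n ∧ ¬2 * a ∣ n)) ∩ distincts N) := by
  classical
  rw [Q, Nat.card_eq_fintype_card, Fintype.card_subtype, restricted, distincts, ← filter_and]
  simp only [mod_four_mul_ne_iff ha, and_comm]

open Nat.Partition in
theorem exists_sq_add_mul_sq_of_not_two_dvd_Q {a : ℕ} (ha : 0 < a) {N : ℕ}
    (hQ : ¬2 ∣ Q (4 * a) a N) : ∃ x y : ℤ, x ^ 2 + a * y ^ 2 = 24 * N + a + 1 := by
  have hQ' : (Q (4 * a) a N : ZMod 2) ≠ 0 := by rwa [ne_eq, ZMod.natCast_eq_zero_iff]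
  rw [Q_four_mul_eq_card ha, ← coeff_distinctsGenFun,
    distinctsGenFun_not_oddMul_eq_mul_expand ha.ne', coeff_mul] at hQ'
  obtain ⟨⟨i, j⟩, hij, hne⟩ := exists_ne_zero_of_sum_ne_zero hQ'
  rw [coeff_expand] at hne
  split_ifs at hne with hdvd
  · obtain ⟨l, rfl⟩ := hdvd
    simp only [Nat.mul_div_cancel_left l ha, distinctsGenFun_true_eq_pentagonalSeries] at hne
    obtain ⟨k, rfl⟩ := not_not.mp ((coeff_pentagonalSeries_eq_zero_iff _).not.mp
      (left_ne_zero_of_mul hne))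
    obtain ⟨m, rfl⟩ := not_not.mp ((coeff_pentagonalSeries_eq_zero_iff _).not.mp
      (right_ne_zero_of_mul hne))
    refine ⟨6 * k - 1, 6 * m - 1, ?_⟩
    rw [HasAntidiagonal.mem_antidiagonal] at hij
    rw [six_mul_sub_one_sq, six_mul_sub_one_sq, ← hij]
    push_cast
    ring
  · simp at hne

theorem Nat.Prime.sq_mod_twentyFour {p : ℕ} (hp : p.Prime) (h5 : 5 ≤ p) : p ^ 2 % 24 = 1 := by
  have h2 : p % 2 ≠ 0 := fun h ↦ by
    have := (Nat.prime_dvd_prime_iff_eq Nat.prime_two hp).mp (Nat.dvd_of_mod_eq_zero h); omega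
  have h3 : p % 3 ≠ 0 := fun h ↦ by
    have := (Nat.prime_dvd_prime_iff_eq Nat.prime_three hp).mp (Nat.dvd_of_mod_eq_zero h); omega
  have key : ∀ r < 24, r % 2 ≠ 0 → r % 3 ≠ 0 → r ^ 2 % 24 = 1 := by decide
  rw [Nat.pow_mod]
  exact key _ (Nat.mod_lt _ (by norm_num)) (by omega) (by omega)

theorem Nat.Prime.twentyFour_dvd_pow_sub_one {p : ℕ} (hp : p.Prime) (h5 : 5 ≤ p) (β : ℕ) :
    24 ∣ p ^ (2 * β + 2) - 1 := by
  refine (Nat.modEq_iff_dvd' (Nat.one_le_pow _ _ hp.pos)).mp ?_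
  rw [Nat.ModEq, show 2 * β + 2 = 2 * (β + 1) by ring, pow_mul, Nat.pow_mod,
    hp.sq_mod_twentyFour h5, one_pow]

theorem Nat.Prime.not_dvd_twentyFour_mul_add {p : ℕ} (hp : p.Prime) (h5 : 5 ≤ p) {j : ℕ}
    (hj1 : 1 ≤ j) (hj2 : j ≤ p - 1) (n c : ℕ) : ¬p ∣ 24 * (p * n + j) + c * p := by
  rw [show 24 * (p * n + j) + c * p = p * (24 * n + c) + 24 * j by ring,
    Nat.dvd_add_right (dvd_mul_right _ _), hp.dvd_mul]
  rintro (h | h)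
  · have := Nat.le_of_dvd (by norm_num) h
    interval_cases p <;> first | omega | norm_num at hp
  · have := Nat.le_of_dvd (by omega) h
    omega

theorem twentyFour_mul_add_eq {p : ℕ} (hp : p.Prime) (h5 : 5 ≤ p) (α β m : ℕ) :
    24 * (p ^ (2 * β + 1) * m + (α + 1) * (p ^ (2 * β + 2) - 1) / 24) + α + 1 =
      p ^ (2 * β + 1) * (24 * m + (α + 1) * p) := by
  have h24 := (hp.twentyFour_dvd_pow_sub_one h5 β).mul_left (α + 1)
  have hpos := Nat.one_le_pow (2 * β + 2) p hp.pos
  rw [Nat.mul_add, Nat.mul_div_cancel' h24]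
  zify [hpos]
  ring

theorem stmt15 (p : ℕ) [Fact p.Prime] (hp : 5 ≤ p) (α : ℕ) (hα : 0 < α)
    (hleg : legendreSym p (-(α : ℤ)) = -1) (j : ℕ) (hj1 : 1 ≤ j) (hj2 : j ≤ p - 1)
    (β n : ℕ) :
    Q (4 * α) α (p ^ (2 * β + 1) * (p * n + j) + (α + 1) * (p ^ (2 * β + 2) - 1) / 24)
      ≡ 0 [MOD 2] := by
  have hprime : p.Prime := Fact.out
  have hu : ¬(p : ℤ) ∣ (24 * (p * n + j) + (α + 1) * p : ℕ) :=
    Int.natCast_dvd_natCast.not.mpr (hprime.not_dvd_twentyFour_mul_add hp hj1 hj2 n _)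
  rw [Nat.modEq_zero_iff_dvd]
  by_contra hQ
  obtain ⟨x, y, hxy⟩ := exists_sq_add_mul_sq_of_not_two_dvd_Q hα hQ
  refine Int.sq_add_mul_sq_ne_prime_pow_odd_mul ((legendreSym.eq_neg_one_iff p).mp hleg) hu β x y ?_
  rw [hxy]
  exact_mod_cast twentyFour_mul_add_eq hprime hp α β (p * n + j)
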